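/- The Dirac-type operator Q in H ⊕ H, Q(f,g) = (−iRf + Bg, Bf) with dom(Q) = dom(B) ⊕ dom(B), is injective and closed, and for every z ∈ ℂ \ {0} the operator Q − z I has an everywhere defined bounded inverse on H ⊕ H if and only if the pencil operator M(z) = B² − i z R − z² I (with domain dom(B²)) has an everywhere defined bounded inverse on H. In particular, if in addition inf σ(B²) = 0 (so that 0 ∈ σ(M(·))), then σ(Q) ∪ {0} = σ(M(·)). -/

import Mathlib

/-!
The closed graph theorem makes the closable operator `R` relatively bounded with respect to the
closed operator `B`, which gives closedness of `Q`. For `z ≠ 0`, `(Q - z)(f, g) = (u, v)` amounts to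
`g = z⁻¹ (B f - v)` and `M(z) f = z u + B v`, so a bounded inverse of `Q - z` yields one of `M(z)`.
Conversely, let `T = M(z)⁻¹`. Von Neumann's theorem for the self-adjoint `B` writes
`B v = p + B² p` with `‖p‖, ‖B p‖ ≤ ‖v‖`, and then `T B v = p + T ((1 + z²) p + i z R p)`; hence
`T B` and `B T B` are bounded on `dom B` and extend to `H`. The resulting right inverse of `Q - z`
on the dense set `H ⊕ dom B` extends to `H ⊕ H` because `Q` is closed. Finally `M(0) = B²`.
-/

open scoped InnerProductSpace

/-- `T − z I` possesses an everywhere defined bounded (two-sided) inverse. -/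
def HasBoundedInverseShifted {V : Type*} [NormedAddCommGroup V] [NormedSpace ℂ V]
    (T : V →ₗ.[ℂ] V) (z : ℂ) : Prop :=
  ∃ S : V →L[ℂ] V, (∀ w : V, (S w, w + z • S w) ∈ T.graph) ∧
    ∀ x y : V, (x, y) ∈ T.graph → S (y - z • x) = x

@[ext]
theorem WithLp.prod_ext {p : ENNReal} {α β : Type*} {x y : WithLp p (α × β)}
    (h1 : x.fst = y.fst) (h2 : x.snd = y.snd) : x = y :=
  (WithLp.ext_iff p).2 (Prod.ext h1 h2)

namespace LinearPMap

variable {𝕜 E F : Type*} [RCLike 𝕜]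
  [NormedAddCommGroup E] [InnerProductSpace 𝕜 E] [NormedAddCommGroup F] [InnerProductSpace 𝕜 F]

def graphLp (B : E →ₗ.[𝕜] F) : Submodule 𝕜 (WithLp 2 (E × F)) :=
  B.graph.comap (WithLp.linearEquiv 2 𝕜 (E × F)).toLinearMap

theorem IsClosed.completeSpace_graphLp [CompleteSpace E] [CompleteSpace F] {B : E →ₗ.[𝕜] F}
    (hB : B.IsClosed) : CompleteSpace B.graphLp :=
  (hB.preimage (WithLp.prod_continuous_ofLp 2 E F)).completeSpace_coe

/-- `R` is `B`-bounded. -/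
theorem IsClosed.exists_clm_apply_toLp_eq [CompleteSpace E] [CompleteSpace F] {G : Type*}
    [NormedAddCommGroup G] [NormedSpace 𝕜 G] [CompleteSpace G] {B : E →ₗ.[𝕜] F} {R : E →ₗ.[𝕜] G}
    (hB : B.IsClosed) (hR : R.IsClosable) (hdom : B.domain ≤ R.domain) :
    ∃ L : WithLp 2 (E × F) →L[𝕜] G,
      ∀ x : B.domain, L (WithLp.toLp 2 ((x : E), B x)) = R ⟨x, hdom x.2⟩ := by
  have := hB.completeSpace_graphLp
  let P := B.graphLp.starProjection
  have hP : ∀ w, (P w).fst ∈ R.domain := fun w =>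
    hdom (mem_domain_of_mem_graph (B.graphLp.starProjection_apply_mem w))
  let φ : WithLp 2 (E × F) →ₗ[𝕜] G :=
    R.toFun ∘ₗ ((WithLp.fstₗ 2 𝕜 E F ∘ₗ P.toLinearMap).codRestrict R.domain hP)
  have hgraph : (φ.graph : Set (WithLp 2 (E × F) × G)) =
      (fun q => ((P q.1).fst, q.2)) ⁻¹' R.closure.graph := by
    ext ⟨w, y⟩
    simp only [SetLike.mem_coe, LinearMap.mem_graph_iff, Set.mem_preimage]
    constructor
    · rintro rfl
      exact le_graph_of_le R.le_closure (R.mem_graph ⟨_, hP w⟩)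
    · intro h
      exact R.closure.mem_graph_snd_inj h
        (le_graph_of_le R.le_closure (R.mem_graph ⟨_, hP w⟩)) rfl
  refine ⟨⟨φ, φ.continuous_of_isClosed_graph ?_⟩, fun x => ?_⟩
  · rw [hgraph]
    exact hR.closure_isClosed.preimage (by fun_prop)
  · have hx : P (WithLp.toLp 2 ((x : E), B x)) = WithLp.toLp 2 ((x : E), B x) :=
      B.graphLp.starProjection_eq_self_iff.mpr (B.mem_graph x)
    change R ⟨(P _).fst, _⟩ = _
    simp_rw [hx]
    rfl

theorem IsClosed.exists_clm_comp {𝕜 E F G : Type*} [NontriviallyNormedField 𝕜]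
    [NormedAddCommGroup E] [NormedSpace 𝕜 E] [NormedAddCommGroup F] [NormedSpace 𝕜 F]
    [CompleteSpace F] [NormedAddCommGroup G] [NormedSpace 𝕜 G] [CompleteSpace G]
    {B : E →ₗ.[𝕜] F} (hB : B.IsClosed) (T : G →L[𝕜] E) (hT : ∀ u, T u ∈ B.domain) :
    ∃ C : G →L[𝕜] F, ∀ u, C u = B ⟨T u, hT u⟩ := by
  let φ : G →ₗ[𝕜] F := B.toFun ∘ₗ (T.toLinearMap.codRestrict B.domain hT)
  have hgraph : (φ.graph : Set (G × F)) = (fun q => (T q.1, q.2)) ⁻¹' B.graph := by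
    ext ⟨u, y⟩
    simp only [SetLike.mem_coe, LinearMap.mem_graph_iff, Set.mem_preimage]
    exact ⟨fun h => h ▸ B.mem_graph ⟨T u, hT u⟩,
      fun h => B.mem_graph_snd_inj h (B.mem_graph ⟨T u, hT u⟩) rfl⟩
  refine ⟨⟨φ, φ.continuous_of_isClosed_graph ?_⟩, fun u => rfl⟩
  rw [hgraph]
  exact hB.preimage (by fun_prop)

end LinearPMap

section SelfAdjoint

open LinearPMap

variable {𝕜 E : Type*} [RCLike 𝕜] [NormedAddCommGroup E] [InnerProductSpace 𝕜 E] [CompleteSpace E]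
  {B : E →ₗ.[𝕜] E}

theorem IsSelfAdjoint.mem_graph_iff_inner (hB : IsSelfAdjoint B) {c d : E} :
    (c, d) ∈ B.graph ↔ ∀ a b, (a, b) ∈ B.graph → ⟪b, c⟫_𝕜 = ⟪a, d⟫_𝕜 := by
  have h : B.graph = B.graph.adjoint := by
    rw [← adjoint_graph_eq_graph_adjoint hB.dense_domain, isSelfAdjoint_def.mp hB]
  conv_lhs => rw [h]
  simp_rw [Submodule.mem_adjoint_iff, sub_eq_zero]

/-- von Neumann: `1 + B²` is onto, found by splitting `(w, 0)` along the graph of `B` and its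
orthogonal complement. -/
theorem IsSelfAdjoint.exists_mem_graph_sq_add (hB : IsSelfAdjoint B) (w : E) :
    ∃ p q, (p, q) ∈ B.graph ∧ (q, w - p) ∈ B.graph := by
  have := hB.isClosed.completeSpace_graphLp
  obtain ⟨y, hy, x, hx, hsum⟩ := B.graphLp.exists_add_mem_mem_orthogonal (WithLp.toLp 2 (w, 0))
  have hfst : w = y.fst + x.fst := congrArg WithLp.fst hsum
  have hsnd : 0 = y.snd + x.snd := congrArg WithLp.snd hsum
  have hx' : (x.snd, -x.fst) ∈ B.graph := by
    refine hB.mem_graph_iff_inner.mpr fun a b hab => ?_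
    have := Submodule.inner_right_of_mem_orthogonal (u := WithLp.toLp 2 (a, b)) hab hx
    change ⟪a, x.fst⟫_𝕜 + ⟪b, x.snd⟫_𝕜 = 0 at this
    simp only [inner_neg_right]
    linear_combination this
  refine ⟨y.fst, y.snd, hy, ?_⟩
  convert B.graph.neg_mem hx' using 1
  ext
  · exact eq_neg_of_add_eq_zero_left hsnd.symm
  · simp [hfst]

theorem IsSelfAdjoint.norm_toLp_le_of_mem_graph_sq_add (hB : IsSelfAdjoint B)
    {v p q : E} (hv : v ∈ B.domain) (hpq : (p, q) ∈ B.graph)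
    (hq : (q, B ⟨v, hv⟩ - p) ∈ B.graph) : ‖WithLp.toLp 2 (p, q)‖ ≤ ‖v‖ := by
  have hqq : ⟪q, q⟫_𝕜 = ⟪p, B ⟨v, hv⟩ - p⟫_𝕜 := hB.mem_graph_iff_inner.mp hq p q hpq
  have hvp : ⟪B ⟨v, hv⟩, p⟫_𝕜 = ⟪v, q⟫_𝕜 := hB.mem_graph_iff_inner.mp hpq v _ (B.mem_graph ⟨v, hv⟩)
  have key : ((‖WithLp.toLp 2 (p, q)‖ ^ 2 : ℝ) : 𝕜) = ⟪p, B ⟨v, hv⟩⟫_𝕜 := by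
    rw [WithLp.prod_norm_sq_eq_of_L2, WithLp.toLp_fst, WithLp.toLp_snd]
    push_cast
    rw [← inner_self_eq_norm_sq_to_K, ← inner_self_eq_norm_sq_to_K, hqq, inner_sub_right]
    ring
  have hle : ‖WithLp.toLp 2 (p, q)‖ ^ 2 ≤ ‖v‖ * ‖WithLp.toLp 2 (p, q)‖ :=
    calc ‖WithLp.toLp 2 (p, q)‖ ^ 2 = ‖⟪p, B ⟨v, hv⟩⟫_𝕜‖ := by
          rw [← key, RCLike.norm_ofReal, abs_of_nonneg (by positivity)]
      _ = ‖⟪v, q⟫_𝕜‖ := by rw [← hvp, norm_inner_symm]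
      _ ≤ ‖v‖ * ‖q‖ := norm_inner_le_norm v q
      _ ≤ ‖v‖ * ‖WithLp.toLp 2 (p, q)‖ := by
          gcongr
          exact WithLp.norm_snd_le _ (WithLp.toLp 2 (p, q))
  nlinarith [norm_nonneg (WithLp.toLp 2 (p, q)), norm_nonneg v]

end SelfAdjoint

section BoundedInverse

variable {V : Type*} [NormedAddCommGroup V] [NormedSpace ℂ V] {T : V →ₗ.[ℂ] V} {z : ℂ}

theorem HasBoundedInverseShifted.eq_zero_of_mem_graph (h : HasBoundedInverseShifted T z)
    {x : V} (hx : (x, z • x) ∈ T.graph) : x = 0 := by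
  obtain ⟨S, -, hS⟩ := h
  simpa using (hS x _ hx).symm

theorem hasBoundedInverseShifted_of_forall_mem_graph (S : V →L[ℂ] V)
    (hS : ∀ w, (S w, w + z • S w) ∈ T.graph) (hinj : ∀ x, (x, z • x) ∈ T.graph → x = 0) :
    HasBoundedInverseShifted T z := by
  refine ⟨S, hS, fun x y hxy => sub_eq_zero.mp (hinj _ ?_)⟩
  convert T.graph.sub_mem (hS (y - z • x)) hxy using 1
  ext
  · rfl
  · simp only [Prod.snd_sub, smul_sub]
    abel

theorem hasBoundedInverseShifted_of_dense (hT : T.IsClosed) (S : V →L[ℂ] V) {s : Set V}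
    (hs : Dense s) (hS : ∀ w ∈ s, (S w, w + z • S w) ∈ T.graph)
    (hinj : ∀ x, (x, z • x) ∈ T.graph → x = 0) : HasBoundedInverseShifted T z := by
  have hclosed : IsClosed {w | (S w, w + z • S w) ∈ T.graph} := hT.preimage (by fun_prop)
  refine hasBoundedInverseShifted_of_forall_mem_graph S (fun w => ?_) hinj
  exact hclosed.closure_subset_iff.mpr hS (hs.closure_eq ▸ Set.mem_univ w)

end BoundedInverse

section Dirac

open LinearPMap

variable {H : Type*} [NormedAddCommGroup H] [InnerProductSpace ℂ H]

def IsPencil (B R : H →ₗ.[ℂ] H) (z : ℂ) (M : H →ₗ.[ℂ] H) : Prop :=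
  ∀ x y : H, (x, y) ∈ M.graph ↔ ∃ (hx : x ∈ B.domain) (hBx : B ⟨x, hx⟩ ∈ B.domain)
    (hR : x ∈ R.domain), B ⟨B ⟨x, hx⟩, hBx⟩ - (Complex.I * z) • R ⟨x, hR⟩ - z ^ 2 • x = y

def IsDirac (B R : H →ₗ.[ℂ] H) (Q : WithLp 2 (H × H) →ₗ.[ℂ] WithLp 2 (H × H)) : Prop :=
  ∀ x y : WithLp 2 (H × H), (x, y) ∈ Q.graph ↔
    ∃ (hf : x.fst ∈ B.domain) (hg : x.snd ∈ B.domain) (hR : x.fst ∈ R.domain),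
      y.fst = -(Complex.I • R ⟨x.fst, hR⟩) + B ⟨x.snd, hg⟩ ∧ y.snd = B ⟨x.fst, hf⟩

variable {B R : H →ₗ.[ℂ] H}

theorem isPencil_of_apply {B2 M : H →ₗ.[ℂ] H} {z : ℂ} (hRdom : B.domain ≤ R.domain)
    (hB2 : ∀ x y : H, (x, y) ∈ B2.graph ↔
      ∃ (hx : x ∈ B.domain) (hBx : B ⟨x, hx⟩ ∈ B.domain), B ⟨B ⟨x, hx⟩, hBx⟩ = y)
    (hMdom : M.domain = B2.domain)
    (hMval : ∀ (x : M.domain) (hx2 : (x : H) ∈ B2.domain) (hxR : (x : H) ∈ R.domain),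
      M x = B2 ⟨(x : H), hx2⟩ - (Complex.I * z) • R ⟨(x : H), hxR⟩ - z ^ 2 • (x : H)) :
    IsPencil B R z M := by
  intro x y
  constructor
  · intro h
    have hxM : x ∈ M.domain := mem_domain_of_mem_graph h
    have hx2 : x ∈ B2.domain := hMdom ▸ hxM
    obtain ⟨hx, hBx, hB2x⟩ := (hB2 x _).mp (B2.mem_graph ⟨x, hx2⟩)
    refine ⟨hx, hBx, hRdom hx, ?_⟩
    rw [hB2x, ← hMval ⟨x, hxM⟩ hx2 (hRdom hx)]
    exact ((image_iff hxM).mpr h).symm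
  · rintro ⟨hx, hBx, hR, rfl⟩
    have hB2x := (hB2 x _).mpr ⟨hx, hBx, rfl⟩
    have hx2 : x ∈ B2.domain := mem_domain_of_mem_graph hB2x
    have hxM : x ∈ M.domain := hMdom ▸ hx2
    refine (image_iff hxM).mp ?_
    rw [hMval ⟨x, hxM⟩ hx2 hR, ← (image_iff hx2).mpr hB2x]

theorem isDirac_of_apply {Q : WithLp 2 (H × H) →ₗ.[ℂ] WithLp 2 (H × H)}
    (hRdom : B.domain ≤ R.domain)
    (hQdom : ∀ x : WithLp 2 (H × H), x ∈ Q.domain ↔ (x.fst ∈ B.domain ∧ x.snd ∈ B.domain))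
    (hQval : ∀ (x : Q.domain) (h1 : (x : WithLp 2 (H × H)).fst ∈ B.domain)
      (h2 : (x : WithLp 2 (H × H)).snd ∈ B.domain)
      (hR : (x : WithLp 2 (H × H)).fst ∈ R.domain),
      Q x = (WithLp.equiv 2 (H × H)).symm
        (-(Complex.I • R ⟨(x : WithLp 2 (H × H)).fst, hR⟩) + B ⟨(x : WithLp 2 (H × H)).snd, h2⟩,
          B ⟨(x : WithLp 2 (H × H)).fst, h1⟩)) :
    IsDirac B R Q := by
  intro x y
  constructor
  · intro h
    have hxQ : x ∈ Q.domain := mem_domain_of_mem_graph h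
    obtain ⟨hf, hg⟩ := (hQdom x).mp hxQ
    have hy := (image_iff hxQ).mpr h
    rw [hQval ⟨x, hxQ⟩ hf hg (hRdom hf)] at hy
    exact ⟨hf, hg, hRdom hf, by rw [hy]; rfl, by rw [hy]; rfl⟩
  · rintro ⟨hf, hg, hR, h1, h2⟩
    have hxQ : x ∈ Q.domain := (hQdom x).mpr ⟨hf, hg⟩
    refine (image_iff hxQ).mp ?_
    rw [hQval ⟨x, hxQ⟩ hf hg hR]
    ext
    · exact h1
    · exact h2

variable {Q : WithLp 2 (H × H) →ₗ.[ℂ] WithLp 2 (H × H)}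

theorem IsDirac.eq_zero_of_apply_eq_zero (hQ : IsDirac B R Q)
    (hker : ∀ f : B.domain, B f = 0 → (f : H) = 0) (x : Q.domain) (hx : Q x = 0) :
    (x : WithLp 2 (H × H)) = 0 := by
  obtain ⟨hf, hg, hR, h1, h2⟩ := (hQ _ _).mp (hx ▸ Q.mem_graph x)
  have hf0 : (x : WithLp 2 (H × H)).fst = 0 := hker ⟨_, hf⟩ h2.symm
  have hR0 : R ⟨(x : WithLp 2 (H × H)).fst, hR⟩ = 0 := by
    simp_rw [hf0]
    exact R.toFun.map_zero
  ext
  · exact hf0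
  · exact hker ⟨_, hg⟩ (by simpa [hR0] using h1.symm)

theorem IsDirac.isClosed [CompleteSpace H] (hQ : IsDirac B R Q) (hB : B.IsClosed)
    (hR : R.IsClosable) (hdom : B.domain ≤ R.domain) : Q.IsClosed := by
  obtain ⟨L, hL⟩ := hB.exists_clm_apply_toLp_eq hR hdom
  -- on the graph of `Q`, `R f = L (f, B f)` with `L` bounded, so the graph is closed
  have hgraph : (Q.graph : Set (WithLp 2 (H × H) × WithLp 2 (H × H))) =
      {X | (X.1.fst, X.2.snd) ∈ B.graph ∧
        (X.1.snd, X.2.fst + Complex.I • L (WithLp.toLp 2 (X.1.fst, X.2.snd))) ∈ B.graph} := by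
    ext ⟨x, y⟩
    simp only [SetLike.mem_coe, Set.mem_ofPred_eq, hQ x y]
    constructor
    · rintro ⟨hf, hg, hR, h1, h2⟩
      rw [h2, hL ⟨_, hf⟩]
      refine ⟨B.mem_graph ⟨_, hf⟩, ?_⟩
      convert B.mem_graph ⟨_, hg⟩ using 2
      rw [h1]
      abel
    · rintro ⟨hf, hg⟩
      have hf' := mem_domain_of_mem_graph hf
      have h2 := (image_iff hf').mpr hf
      rw [h2, hL ⟨_, hf'⟩] at hg
      have hg' := mem_domain_of_mem_graph hg
      refine ⟨hf', hg', hdom hf', ?_, h2⟩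
      rw [← (image_iff hg').mpr hg]
      abel
  rw [LinearPMap.IsClosed, hgraph]
  exact (hB.preimage (by fun_prop)).inter (hB.preimage (by fun_prop))

variable {M : H →ₗ.[ℂ] H} {z : ℂ}

theorem IsDirac.mem_graph_pencil_of_mem_graph (hQ : IsDirac B R Q) (hM : IsPencil B R z M)
    {x : WithLp 2 (H × H)} {u : H} (h : (x, WithLp.toLp 2 (u, 0) + z • x) ∈ Q.graph) :
    (x.fst, z • u) ∈ M.graph := by
  obtain ⟨hf, hg, hR, h1, h2⟩ := (hQ _ _).mp h
  simp only [WithLp.add_fst, WithLp.add_snd, WithLp.smul_fst, WithLp.smul_snd, WithLp.toLp_fst,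
    WithLp.toLp_snd, zero_add] at h1 h2
  have hBg : B ⟨x.snd, hg⟩ = Complex.I • R ⟨x.fst, hR⟩ + (u + z • x.fst) :=
    (eq_neg_add_iff_add_eq.mp h1).symm
  have hBf : B ⟨x.fst, hf⟩ ∈ B.domain := h2 ▸ B.domain.smul_mem z hg
  have hsub : (⟨B ⟨x.fst, hf⟩, hBf⟩ : B.domain) = z • ⟨x.snd, hg⟩ := Subtype.ext h2.symm
  refine (hM _ _).mpr ⟨hf, hBf, hR, ?_⟩
  rw [hsub, LinearPMap.map_smul, hBg]
  module

theorem IsDirac.mem_graph_of_mem_graph_pencil (hQ : IsDirac B R Q) (hM : IsPencil B R z M)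
    (hz : z ≠ 0) {f u : H} {v : B.domain} (hf : f ∈ B.domain) (h : (f, z • u + B v) ∈ M.graph) :
    (WithLp.toLp 2 (f, z⁻¹ • (B ⟨f, hf⟩ - v)), WithLp.toLp 2 (u + z • f, B ⟨f, hf⟩)) ∈ Q.graph := by
  obtain ⟨_, hBf, hR, hMf⟩ := (hM _ _).mp h
  have hg : z⁻¹ • (B ⟨f, hf⟩ - v) ∈ B.domain := B.domain.smul_mem _ (sub_mem hBf v.2)
  have hsub : (⟨z⁻¹ • (B ⟨f, hf⟩ - v), hg⟩ : B.domain) = z⁻¹ • (⟨B ⟨f, hf⟩, hBf⟩ - v) := rfl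
  refine (hQ _ _).mpr ⟨hf, hg, hR, ?_, rfl⟩
  simp only [WithLp.toLp_fst, WithLp.toLp_snd]
  have hBB : B ⟨B ⟨f, hf⟩, hBf⟩ = z • u + B v + (Complex.I * z) • R ⟨f, hR⟩ + z ^ 2 • f := by
    rw [← hMf]
    abel
  rw [hsub, LinearPMap.map_smul, LinearPMap.map_sub, hBB]
  match_scalars <;> field_simp <;> ring

theorem IsDirac.hasBoundedInverseShifted_pencil (hQ : IsDirac B R Q) (hM : IsPencil B R z M)
    (hz : z ≠ 0) (h : HasBoundedInverseShifted Q z) : HasBoundedInverseShifted M 0 := by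
  have hinj : ∀ x, (x, (0 : ℂ) • x) ∈ M.graph → x = 0 := by
    intro x hx
    rw [zero_smul] at hx
    obtain ⟨hf, -⟩ := (hM _ _).mp hx
    have hX := hQ.mem_graph_of_mem_graph_pencil hM hz (u := 0) (v := 0) hf (by simpa using hx)
    exact congrArg WithLp.fst (h.eq_zero_of_mem_graph (by convert hX using 2; ext <;> simp [hz]))
  obtain ⟨S, hS, -⟩ := h
  let ι : H →L[ℂ] WithLp 2 (H × H) :=
    (WithLp.prodContinuousLinearEquiv 2 ℂ H H).symm.toContinuousLinearMap ∘L
      ContinuousLinearMap.inl ℂ H H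
  refine hasBoundedInverseShifted_of_forall_mem_graph
    (WithLp.fstL 2 ℂ H H ∘L S ∘L ι ∘L (z⁻¹ • ContinuousLinearMap.id ℂ H)) (fun w => ?_) hinj
  simpa [hz] using hQ.mem_graph_pencil_of_mem_graph hM (hS (ι (z⁻¹ • w)))

section Inverse

variable [CompleteSpace H] {L : WithLp 2 (H × H) →L[ℂ] H} {T : H →L[ℂ] H}

/-- Here `B v = p + B² p`, so that `M p = B v - w` for `w = (1 + z²) p + i z R p`. -/
theorem IsPencil.exists_inverse_apply_eq_add (hB : IsSelfAdjoint B)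
    (hdom : B.domain ≤ R.domain) (hM : IsPencil B R z M)
    (hL : ∀ x : B.domain, L (WithLp.toLp 2 ((x : H), B x)) = R ⟨x, hdom x.2⟩)
    (hT : ∀ x y, (x, y) ∈ M.graph → T y = x) (v : B.domain) :
    ∃ (p : H) (hp : p ∈ B.domain) (w : H), T (B v) = p + T w ∧ ‖p‖ ≤ ‖(v : H)‖ ∧
      ‖B ⟨p, hp⟩‖ ≤ ‖(v : H)‖ ∧ ‖w‖ ≤ (‖1 + z ^ 2‖ + ‖z‖ * ‖L‖) * ‖(v : H)‖ := by
  obtain ⟨p, q, hpq, hq⟩ := hB.exists_mem_graph_sq_add (B v)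
  have hnorm := hB.norm_toLp_le_of_mem_graph_sq_add v.2 hpq hq
  have hp : p ∈ B.domain := mem_domain_of_mem_graph hpq
  have hBp : B ⟨p, hp⟩ = q := ((image_iff hp).mpr hpq).symm
  have hBBp : (B ⟨p, hp⟩, B v - p) ∈ B.graph := hBp ▸ hq
  have hRp : ‖R ⟨p, hdom hp⟩‖ ≤ ‖L‖ * ‖(v : H)‖ := by
    rw [← hL ⟨p, hp⟩, hBp]
    exact (L.le_opNorm _).trans (by gcongr)
  set w := (1 + z ^ 2) • p + (Complex.I * z) • R ⟨p, hdom hp⟩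
  refine ⟨p, hp, w, ?_, (WithLp.norm_fst_le _ _).trans hnorm,
    hBp ▸ (WithLp.norm_snd_le _ _).trans hnorm, ?_⟩
  · have hMp : (p, B v - w) ∈ M.graph := by
      refine (hM _ _).mpr ⟨hp, mem_domain_of_mem_graph hBBp, hdom hp, ?_⟩
      rw [← (image_iff _).mpr hBBp]
      module
    rw [← sub_add_cancel (B v : H) w, _root_.map_add, hT _ _ hMp]
  · calc ‖w‖
        ≤ ‖1 + z ^ 2‖ * ‖p‖ + ‖z‖ * ‖R ⟨p, hdom hp⟩‖ := by
          refine (norm_add_le _ _).trans ?_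
          rw [norm_smul, norm_smul, norm_mul, Complex.norm_I, one_mul]
      _ ≤ ‖1 + z ^ 2‖ * ‖(v : H)‖ + ‖z‖ * (‖L‖ * ‖(v : H)‖) := by
          gcongr
          exact (WithLp.norm_fst_le _ _).trans hnorm
      _ = (‖1 + z ^ 2‖ + ‖z‖ * ‖L‖) * ‖(v : H)‖ := by ring

theorem IsPencil.norm_inverse_apply_le (hB : IsSelfAdjoint B) (hdom : B.domain ≤ R.domain)
    (hM : IsPencil B R z M)
    (hL : ∀ x : B.domain, L (WithLp.toLp 2 ((x : H), B x)) = R ⟨x, hdom x.2⟩)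
    (hT : ∀ x y, (x, y) ∈ M.graph → T y = x) (v : B.domain) :
    ‖T (B v)‖ ≤ (1 + ‖T‖ * (‖1 + z ^ 2‖ + ‖z‖ * ‖L‖)) * ‖(v : H)‖ := by
  obtain ⟨p, -, w, hTv, hpv, -, hw⟩ := hM.exists_inverse_apply_eq_add hB hdom hL hT v
  calc ‖T (B v)‖ ≤ ‖p‖ + ‖T‖ * ‖w‖ := hTv ▸ (norm_add_le _ _).trans (by gcongr; exact T.le_opNorm w)
    _ ≤ ‖(v : H)‖ + ‖T‖ * ((‖1 + z ^ 2‖ + ‖z‖ * ‖L‖) * ‖(v : H)‖) := by gcongr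
    _ = (1 + ‖T‖ * (‖1 + z ^ 2‖ + ‖z‖ * ‖L‖)) * ‖(v : H)‖ := by ring

theorem IsPencil.norm_apply_inverse_apply_le (hB : IsSelfAdjoint B)
    (hdom : B.domain ≤ R.domain) (hM : IsPencil B R z M)
    (hL : ∀ x : B.domain, L (WithLp.toLp 2 ((x : H), B x)) = R ⟨x, hdom x.2⟩)
    (hT : ∀ x y, (x, y) ∈ M.graph → T y = x) (hTdom : ∀ u, T u ∈ B.domain)
    {E : H →L[ℂ] H} (hE : ∀ u, E u = B ⟨T u, hTdom u⟩) (v : B.domain) :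
    ‖E (B v)‖ ≤ (1 + ‖E‖ * (‖1 + z ^ 2‖ + ‖z‖ * ‖L‖)) * ‖(v : H)‖ := by
  obtain ⟨p, hp, w, hTv, -, hBpv, hw⟩ := hM.exists_inverse_apply_eq_add hB hdom hL hT v
  have hEv : E (B v) = B ⟨p, hp⟩ + E w := by
    rw [hE, hE, ← LinearPMap.map_add]
    exact congrArg B (Subtype.ext hTv)
  calc ‖E (B v)‖ ≤ ‖B ⟨p, hp⟩‖ + ‖E‖ * ‖w‖ :=
        hEv ▸ (norm_add_le _ _).trans (by gcongr; exact E.le_opNorm w)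
    _ ≤ ‖(v : H)‖ + ‖E‖ * ((‖1 + z ^ 2‖ + ‖z‖ * ‖L‖) * ‖(v : H)‖) := by gcongr
    _ = (1 + ‖E‖ * (‖1 + z ^ 2‖ + ‖z‖ * ‖L‖)) * ‖(v : H)‖ := by ring

theorem IsPencil.exists_clm_extensions (hB : IsSelfAdjoint B) (hR : R.IsClosable)
    (hdom : B.domain ≤ R.domain) (hM : IsPencil B R z M) (hT : ∀ x y, (x, y) ∈ M.graph → T y = x)
    (hTdom : ∀ u, T u ∈ B.domain) :
    ∃ E C D : H →L[ℂ] H, (∀ u, E u = B ⟨T u, hTdom u⟩) ∧ (∀ v : B.domain, C v = T (B v)) ∧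
      ∀ v : B.domain, D v = E (B v) := by
  obtain ⟨L, hL⟩ := hB.isClosed.exists_clm_apply_toLp_eq hR hdom
  obtain ⟨E, hE⟩ := hB.isClosed.exists_clm_comp T hTdom
  have hdense : DenseRange B.domain.subtype := hB.dense_domain.denseRange_val
  exact ⟨E, (T.toLinearMap ∘ₗ B.toFun).extendOfNorm B.domain.subtype,
    (E.toLinearMap ∘ₗ B.toFun).extendOfNorm B.domain.subtype, hE,
    LinearMap.extendOfNorm_eq hdense ⟨_, hM.norm_inverse_apply_le hB hdom hL hT⟩,
    LinearMap.extendOfNorm_eq hdense ⟨_, hM.norm_apply_inverse_apply_le hB hdom hL hT hTdom hE⟩⟩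

end Inverse

theorem IsDirac.eq_zero_of_mem_graph_of_pencil (hQ : IsDirac B R Q) (hM : IsPencil B R z M)
    (hz : z ≠ 0) (hMinj : ∀ y, (y, 0) ∈ M.graph → y = 0) {x : WithLp 2 (H × H)}
    (hx : (x, z • x) ∈ Q.graph) : x = 0 := by
  have hfst : x.fst = 0 := hMinj _ <| by
    simpa using hQ.mem_graph_pencil_of_mem_graph hM (u := 0) (by convert hx using 2; ext <;> simp)
  obtain ⟨hf, -, -, -, h2⟩ := (hQ _ _).mp hx
  have hsnd : z • x.snd = 0 := by
    rw [← WithLp.smul_snd, h2]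
    simp_rw [hfst]
    exact B.toFun.map_zero
  ext
  · exact hfst
  · exact (smul_eq_zero.mp hsnd).resolve_left hz

theorem IsDirac.hasBoundedInverseShifted_of_pencil [CompleteSpace H] (hQ : IsDirac B R Q)
    (hB : IsSelfAdjoint B) (hR : R.IsClosable) (hdom : B.domain ≤ R.domain)
    (hM : IsPencil B R z M) (hz : z ≠ 0) (h : HasBoundedInverseShifted M 0) :
    HasBoundedInverseShifted Q z := by
  obtain ⟨T, hTr, hTl⟩ := h
  simp only [zero_smul, add_zero, sub_zero] at hTr hTl
  have hTdom : ∀ u, T u ∈ B.domain := fun u => ((hM _ _).mp (hTr u)).1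
  obtain ⟨E, C, D, hE, hC, hD⟩ := hM.exists_clm_extensions hB hR hdom hTl hTdom
  let e := WithLp.prodContinuousLinearEquiv 2 ℂ H H
  -- for `v ∈ dom B`, `S (u, v) = (f, z⁻¹ (B f - v))` with `f = T (z u + B v)`
  let S : WithLp 2 (H × H) →L[ℂ] WithLp 2 (H × H) := e.symm.toContinuousLinearMap ∘L
    ((z • T).coprod C).prod (E.coprod (z⁻¹ • (D - ContinuousLinearMap.id ℂ H))) ∘L
      e.toContinuousLinearMap
  refine hasBoundedInverseShifted_of_dense (hQ.isClosed hB.isClosed hR hdom) S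
    (s := e ⁻¹' (Set.univ ×ˢ B.domain))
    ((dense_univ.prod hB.dense_domain).preimage e.toHomeomorph.isOpenMap) ?_
    (fun x => hQ.eq_zero_of_mem_graph_of_pencil hM hz fun y hy => by simpa using (hTl _ _ hy).symm)
  rintro w ⟨-, hw : w.snd ∈ B.domain⟩
  set f := T (z • w.fst + B ⟨w.snd, hw⟩) with hf
  have hSw : S w = WithLp.toLp 2 (f, z⁻¹ • (B ⟨f, hTdom _⟩ - w.snd)) := by
    ext
    · change z • T w.fst + C w.snd = f
      rw [hf, hC ⟨w.snd, hw⟩, _root_.map_add, _root_.map_smul]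
    · change E w.fst + z⁻¹ • (D w.snd - w.snd) = z⁻¹ • (B ⟨f, hTdom _⟩ - w.snd)
      rw [hD ⟨w.snd, hw⟩, ← hE, _root_.map_add, _root_.map_smul, add_sub_assoc, smul_add,
        smul_smul, inv_mul_cancel₀ hz, one_smul]
  show (S w, w + z • S w) ∈ Q.graph
  rw [hSw]
  convert hQ.mem_graph_of_mem_graph_pencil hM hz (v := ⟨w.snd, hw⟩) (hTdom _) (hTr _) using 2
  ext
  · rfl
  · simp only [WithLp.add_snd, WithLp.smul_snd, WithLp.toLp_snd, smul_smul, mul_inv_cancel₀ hz,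
      one_smul]
    abel

end Dirac

theorem dirac_pencil_spectrum_inf_zero_general
    {H : Type*}
    [NormedAddCommGroup H] [InnerProductSpace ℂ H] [CompleteSpace H]
    (B : H →ₗ.[ℂ] H)
    (hBsa : B.adjoint = B)
    (hBker : ∀ f : B.domain, B f = 0 → (f : H) = 0)
    (R : H →ₗ.[ℂ] H)
    (hRclosable : R.IsClosable)
    (hRdom : B.domain ≤ R.domain)
    -- `B² = B ∘ B` with its natural domain:
    (B2 : H →ₗ.[ℂ] H)
    (hB2 : ∀ (x y : H), (x, y) ∈ B2.graph ↔
      ∃ (hx : x ∈ B.domain) (hBx : B ⟨x, hx⟩ ∈ B.domain), B ⟨B ⟨x, hx⟩, hBx⟩ = y)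
    -- the pencil `M(z) = B² − i z R − z² I` with `dom(M(z)) = dom(B²)`:
    (M : ℂ → (H →ₗ.[ℂ] H))
    (hMdom : ∀ z : ℂ, (M z).domain = B2.domain)
    (hMval : ∀ (z : ℂ) (x : (M z).domain) (hx2 : (x : H) ∈ B2.domain)
      (hxR : (x : H) ∈ R.domain),
      M z x = B2 ⟨(x : H), hx2⟩ - (Complex.I * z) • R ⟨(x : H), hxR⟩ - z ^ 2 • (x : H))
    -- the Dirac-type operator `Q(f,g) = (−iRf + Bg, Bf)`, `dom(Q) = dom(B) ⊕ dom(B)`: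
    (Q : WithLp 2 (H × H) →ₗ.[ℂ] WithLp 2 (H × H))
    (hQdom : ∀ x : WithLp 2 (H × H), x ∈ Q.domain ↔
      (x.fst ∈ B.domain ∧ x.snd ∈ B.domain))
    (hQval : ∀ (x : Q.domain) (h1 : (x : WithLp 2 (H × H)).fst ∈ B.domain)
      (h2 : (x : WithLp 2 (H × H)).snd ∈ B.domain)
      (hR : (x : WithLp 2 (H × H)).fst ∈ R.domain),
      Q x = (WithLp.equiv 2 (H × H)).symm
        (-(Complex.I • R ⟨(x : WithLp 2 (H × H)).fst, hR⟩) + B ⟨(x : WithLp 2 (H × H)).snd, h2⟩,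
          B ⟨(x : WithLp 2 (H × H)).fst, h1⟩)) :
    -- `Q` is injective and closed:
    (∀ x : Q.domain, Q x = 0 → (x : WithLp 2 (H × H)) = 0) ∧
    Q.IsClosed ∧
    -- for `z ≠ 0`, bounded invertibility of `Q − zI` and of `M(z)` are equivalent:
    (∀ z : ℂ, z ≠ 0 → (HasBoundedInverseShifted Q z ↔ HasBoundedInverseShifted (M z) 0)) ∧
    -- if in addition `0 ∈ σ(B²)`, then `σ(Q) ∪ {0} = σ(M(·))`:
    (¬ HasBoundedInverseShifted B2 0 →
      {z : ℂ | ¬ HasBoundedInverseShifted Q z} ∪ {0} =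
        {z : ℂ | ¬ HasBoundedInverseShifted (M z) 0}) := by
  have hB : IsSelfAdjoint B := LinearPMap.isSelfAdjoint_def.mpr hBsa
  have hM : ∀ z, IsPencil B R z (M z) := fun z => isPencil_of_apply hRdom hB2 (hMdom z) (hMval z)
  have hQ : IsDirac B R Q := isDirac_of_apply hRdom hQdom hQval
  have hQM : ∀ z : ℂ, z ≠ 0 → (HasBoundedInverseShifted Q z ↔ HasBoundedInverseShifted (M z) 0) :=
    fun z hz => ⟨hQ.hasBoundedInverseShifted_pencil (hM z) hz,
      hQ.hasBoundedInverseShifted_of_pencil hB hRclosable hRdom (hM z) hz⟩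
  refine ⟨hQ.eq_zero_of_apply_eq_zero hBker, hQ.isClosed hB.isClosed hRclosable hRdom, hQM,
    fun hB2inv => ?_⟩
  have hM0 : M 0 = B2 := LinearPMap.eq_of_eq_graph <| by
    ext ⟨x, y⟩
    rw [hM 0 x y, hB2 x y]
    exact ⟨fun ⟨hx, hBx, _, h⟩ => ⟨hx, hBx, by simpa using h⟩,
      fun ⟨hx, hBx, h⟩ => ⟨hx, hBx, hRdom hx, by simpa using h⟩⟩
  ext z
  rcases eq_or_ne z 0 with rfl | hz
  · simp [hM0, hB2inv]
  · simp [hQM z hz, hz]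

/-- Theorem 5.3. Let `B` be self-adjoint in `H` with `ker(B) = {0}` and let
`R` be densely defined closable with `dom(R) ∩ dom(R*) ⊇ dom(B)`.  The Dirac-type operator
`Q(f,g) = (−iRf + Bg, Bf)` on `dom(B) ⊕ dom(B)` in `H ⊕ H` is injective and closed, and for
every `z ≠ 0`, `Q − zI` is boundedly invertible iff the pencil `M(z) = B² − izR − z²I` (on
`dom(B²)`) is.  In particular, if moreover `inf σ(B²) = 0` (i.e. `B²` is not boundedly
invertible), then `σ(Q) ∪ {0} = σ(M(·))`. -/
theorem dirac_pencil_spectrum_inf_zero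
    {H : Type*}
    [NormedAddCommGroup H] [InnerProductSpace ℂ H] [CompleteSpace H]
    [TopologicalSpace.SeparableSpace H]
    (B : H →ₗ.[ℂ] H)
    (hBdense : Dense (B.domain : Set H))
    (hBsa : B.adjoint = B)
    (hBker : ∀ f : B.domain, B f = 0 → (f : H) = 0)
    (R : H →ₗ.[ℂ] H)
    (hRdense : Dense (R.domain : Set H))
    (hRclosable : R.IsClosable)
    (hRdom : B.domain ≤ R.domain)
    (hRstardom : B.domain ≤ R.adjoint.domain)
    -- `B² = B ∘ B` with its natural domain:
    (B2 : H →ₗ.[ℂ] H)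
    (hB2 : ∀ (x y : H), (x, y) ∈ B2.graph ↔
      ∃ (hx : x ∈ B.domain) (hBx : B ⟨x, hx⟩ ∈ B.domain), B ⟨B ⟨x, hx⟩, hBx⟩ = y)
    -- the pencil `M(z) = B² − i z R − z² I` with `dom(M(z)) = dom(B²)`:
    (M : ℂ → (H →ₗ.[ℂ] H))
    (hMdom : ∀ z : ℂ, (M z).domain = B2.domain)
    (hMval : ∀ (z : ℂ) (x : (M z).domain) (hx2 : (x : H) ∈ B2.domain)
      (hxR : (x : H) ∈ R.domain),
      M z x = B2 ⟨(x : H), hx2⟩ - (Complex.I * z) • R ⟨(x : H), hxR⟩ - z ^ 2 • (x : H))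
    -- the Dirac-type operator `Q(f,g) = (−iRf + Bg, Bf)`, `dom(Q) = dom(B) ⊕ dom(B)`:
    (Q : WithLp 2 (H × H) →ₗ.[ℂ] WithLp 2 (H × H))
    (hQdom : ∀ x : WithLp 2 (H × H), x ∈ Q.domain ↔
      (x.fst ∈ B.domain ∧ x.snd ∈ B.domain))
    (hQval : ∀ (x : Q.domain) (h1 : (x : WithLp 2 (H × H)).fst ∈ B.domain)
      (h2 : (x : WithLp 2 (H × H)).snd ∈ B.domain)
      (hR : (x : WithLp 2 (H × H)).fst ∈ R.domain),
      Q x = (WithLp.equiv 2 (H × H)).symm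
        (-(Complex.I • R ⟨(x : WithLp 2 (H × H)).fst, hR⟩) + B ⟨(x : WithLp 2 (H × H)).snd, h2⟩,
          B ⟨(x : WithLp 2 (H × H)).fst, h1⟩)) :
    -- `Q` is injective and closed:
    (∀ x : Q.domain, Q x = 0 → (x : WithLp 2 (H × H)) = 0) ∧
    Q.IsClosed ∧
    -- for `z ≠ 0`, bounded invertibility of `Q − zI` and of `M(z)` are equivalent:
    (∀ z : ℂ, z ≠ 0 → (HasBoundedInverseShifted Q z ↔ HasBoundedInverseShifted (M z) 0)) ∧
    -- if in addition `0 ∈ σ(B²)`, then `σ(Q) ∪ {0} = σ(M(·))`: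
    (¬ HasBoundedInverseShifted B2 0 →
      {z : ℂ | ¬ HasBoundedInverseShifted Q z} ∪ {0} =
        {z : ℂ | ¬ HasBoundedInverseShifted (M z) 0}) :=
  dirac_pencil_spectrum_inf_zero_general B hBsa hBker R hRclosable hRdom B2 hB2 M hMdom hMval Q
    hQdom hQval
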